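/- Let (V, F_1, ..., F_n) be a finite dimensional multifiltered k-vector space. The fiber of the Rees module at the origin, i.e. Rees(V) ⊗_{k[z_1,...,z_n]} k[z]/(z_1,...,z_n), is isomorphic as a ℤ^n-graded k-vector space to ⊕_{p∈ℤ^n} D^{-p}, where D^p = F^p/(Σ_{i=1}^n F^{p+e_i}). -/

import Mathlib

namespace ToricRees

open Finsupp

variable {k : Type*} [Field k]

/-- Multi-indices. -/
abbrev MIdx (n : ℕ) := Fin n → ℤ

/-- A descending, separated and exhaustive filtration. -/
structure IsFilt {V : Type*} [AddCommGroup V] [Module k V] (F : ℤ → Submodule k V) : Prop where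
  mono : ∀ ⦃p q : ℤ⦄, p ≤ q → F q ≤ F p
  sep : ∃ P : ℤ, ∀ p, P ≤ p → F p = ⊥
  exh : ∃ P : ℤ, ∀ p, p ≤ P → F p = ⊤

variable {n : ℕ} {V W : Type*} [AddCommGroup V] [Module k V] [AddCommGroup W] [Module k W]

/-- `F^p = F_1^{p_1} ∩ ... ∩ F_n^{p_n}`. -/
def fcap (F : Fin n → ℤ → Submodule k V) (p : MIdx n) : Submodule k V := ⨅ i, F i (p i)

/-- A splitting of an `n`-tuple of filtrations: a `ℤ^n`-grading `V = ⊕_p V^p`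
with `F_i^r = ⊕_{p : p_i ≥ r} V^p`. -/
def IsSplitting (F : Fin n → ℤ → Submodule k V) (𝒱 : MIdx n → Submodule k V) : Prop :=
  DirectSum.IsInternal 𝒱 ∧ ∀ (i : Fin n) (r : ℤ), F i r = ⨆ p ∈ {p : MIdx n | r ≤ p i}, 𝒱 p

def Splittable (F : Fin n → ℤ → Submodule k V) : Prop := ∃ 𝒱, IsSplitting F 𝒱

/-- `D^p = F^p / Σ_i F^{p+e_i}`. -/
noncomputable def Dmod (F : Fin n → ℤ → Submodule k V) (p : MIdx n) :=
  ↥(fcap F p) ⧸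
    (Submodule.comap (fcap F p).subtype (⨆ i : Fin n, fcap F (p + Pi.single i 1)))

noncomputable instance (F : Fin n → ℤ → Submodule k V) (p : MIdx n) :
    AddCommGroup (Dmod F p) := by unfold Dmod; infer_instance

noncomputable instance (F : Fin n → ℤ → Submodule k V) (p : MIdx n) :
    Module k (Dmod F p) := by unfold Dmod; infer_instance

/-- Multiplication by `z^g` on `V ⊗ k[z_1^{±1},...,z_n^{±1}] = (ℤ^n →₀ V)`. -/
noncomputable def shiftL (g : MIdx n) : (MIdx n →₀ V) →ₗ[k] (MIdx n →₀ V) :=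
  Finsupp.lmapDomain V k (fun d => d + g)

lemma shiftL_apply (g : MIdx n) (s : MIdx n →₀ V) (d : MIdx n) :
    shiftL (k := k) g s d = s (d - g) := by
  have h : d = (d - g) + g := (sub_add_cancel d g).symm
  rw [h, shiftL]
  simpa using Finsupp.mapDomain_apply (add_left_injective g) s (d - g)

/-- The monoid homomorphism sending a monomial exponent to the corresponding shift. -/
noncomputable def shiftMonoidHom :
    Multiplicative (Fin n →₀ ℕ) →* Module.End k (MIdx n →₀ V) where
  toFun a := shiftL (fun i => ((Multiplicative.toAdd a) i : ℤ))
  map_one' := LinearMap.ext fun s => Finsupp.ext fun d => by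
    rw [shiftL_apply]
    show s _ = s d
    congr 1
    funext i
    simp
  map_mul' a b := LinearMap.ext fun s => Finsupp.ext fun d => by
    show shiftL _ s d = (shiftL _ ∘ₗ shiftL _) s d
    rw [LinearMap.comp_apply, shiftL_apply, shiftL_apply, shiftL_apply]
    congr 1
    funext i
    simp [sub_sub]

/-- The algebra map from `k[z_1,...,z_n]` to endomorphisms of `ℤ^n →₀ V`,
sending `z^a` to the shift by `a`. -/
noncomputable def polyActionHom (k V : Type*) [Field k] [AddCommGroup V] [Module k V] (n : ℕ) :
    MvPolynomial (Fin n) k →ₐ[k] Module.End k (MIdx n →₀ V) :=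
  (AddMonoidAlgebra.lift k (Module.End k (MIdx n →₀ V)) (Fin n →₀ ℕ)) shiftMonoidHom

/-- The `k[z_1,...,z_n]`-module structure on `V ⊗ k[z_1^{±1},...,z_n^{±1}] = (ℤ^n →₀ V)`. -/
noncomputable instance : Module (MvPolynomial (Fin n) k) (MIdx n →₀ V) :=
  Module.compHom _ (polyActionHom k V n).toRingHom

lemma poly_smul_def (p : MvPolynomial (Fin n) k) (s : MIdx n →₀ V) :
    p • s = polyActionHom k V n p s := rfl

lemma polyActionHom_X (i : Fin n) :
    polyActionHom k V n (MvPolynomial.X i)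
      = shiftL (fun j => ((Finsupp.single i 1 : Fin n →₀ ℕ) j : ℤ)) := by
  have hX : (MvPolynomial.X i : MvPolynomial (Fin n) k)
      = AddMonoidAlgebra.single (Finsupp.single i 1) 1 := by
    rw [MvPolynomial.X, MvPolynomial.monomial]
    rfl
  rw [polyActionHom, hX]
  erw [AddMonoidAlgebra.lift_single (shiftMonoidHom (k := k) (n := n) (V := V)) (Finsupp.single i 1) (1 : k)]
  rw [one_smul]
  rfl

lemma X_smul (i : Fin n) (s : MIdx n →₀ V) :
    (MvPolynomial.X i : MvPolynomial (Fin n) k) • s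
      = shiftL (k := k) (fun j => ((Finsupp.single i 1 : Fin n →₀ ℕ) j : ℤ)) s := by
  rw [poly_smul_def, polyActionHom_X]

lemma C_smul (a : k) (s : MIdx n →₀ V) :
    (MvPolynomial.C a : MvPolynomial (Fin n) k) • s = a • s := by
  rw [poly_smul_def]
  have h : (MvPolynomial.C a : MvPolynomial (Fin n) k) = algebraMap k _ a := rfl
  rw [h, AlgHom.commutes]
  rfl

instance : IsScalarTower k (MvPolynomial (Fin n) k) (MIdx n →₀ V) := by
  constructor
  intro a p s
  rw [poly_smul_def, poly_smul_def, map_smul]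
  rfl

/-- The underlying set of the Rees module:
`Rees(V,F) = Σ_p F^p V ⊗ z^{-p} ⊆ V ⊗ k[z^{±1}]`, concretely the set of finitely
supported `V`-valued functions `s` on `ℤ^n` with `s d ∈ F^{-d}`. -/
def ReesSet (F : Fin n → ℤ → Submodule k V) : Set (MIdx n →₀ V) :=
  {s | ∀ d : MIdx n, s d ∈ fcap F (-d)}

lemma shiftL_mem_ReesSet {F : Fin n → ℤ → Submodule k V} (hF : ∀ i, IsFilt (F i))
    {g : MIdx n} (hg : 0 ≤ g) {s : MIdx n →₀ V} (hs : s ∈ ReesSet F) :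
    shiftL (k := k) g s ∈ ReesSet F := by
  intro d
  rw [shiftL_apply]
  have h1 : s (d - g) ∈ fcap F (-(d - g)) := hs _
  refine Submodule.mem_iInf _ |>.2 fun i => ?_
  refine (hF i).mono ?_ ((Submodule.mem_iInf _).1 h1 i)
  have := hg i
  simp only [Pi.neg_apply, Pi.sub_apply, Pi.zero_apply] at *
  omega

lemma polyActionHom_preserves {F : Fin n → ℤ → Submodule k V} (hF : ∀ i, IsFilt (F i))
    (p : MvPolynomial (Fin n) k) :
    ∀ s ∈ ReesSet F, polyActionHom k V n p s ∈ ReesSet F := by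
  have hp : p ∈ (⊤ : Subalgebra k (MvPolynomial (Fin n) k)) := trivial
  rw [← MvPolynomial.adjoin_range_X] at hp
  induction hp using Algebra.adjoin_induction with
  | mem q hq =>
      obtain ⟨i, rfl⟩ := hq
      intro s hs
      rw [polyActionHom_X]
      refine shiftL_mem_ReesSet hF (fun j => ?_) hs
      simp only [Pi.zero_apply]
      positivity
  | algebraMap a =>
      intro s hs
      rw [AlgHom.commutes]
      have : (algebraMap k (Module.End k (MIdx n →₀ V)) a) s = a • s := rfl
      rw [this]
      intro d
      rw [Finsupp.smul_apply]
      exact Submodule.smul_mem _ _ (hs d)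
  | add q r _ _ ihq ihr =>
      intro s hs
      rw [map_add]
      have : (polyActionHom k V n q + polyActionHom k V n r) s
          = polyActionHom k V n q s + polyActionHom k V n r s := rfl
      rw [this]
      intro d
      rw [Finsupp.add_apply]
      exact Submodule.add_mem _ (ihq s hs d) (ihr s hs d)
  | mul q r _ _ ihq ihr =>
      intro s hs
      rw [map_mul]
      exact ihq _ (ihr s hs)

/-- The Rees module `Rees(V,F)` as a `k[z_1,...,z_n]`-submodule of `ℤ^n →₀ V`. -/
noncomputable def ReesModule (F : Fin n → ℤ → Submodule k V) (hF : ∀ i, IsFilt (F i)) :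
    Submodule (MvPolynomial (Fin n) k) (MIdx n →₀ V) where
  carrier := ReesSet F
  zero_mem' := fun d => by simp
  add_mem' := fun {s} {t} hs ht d => by
    rw [Finsupp.add_apply]; exact Submodule.add_mem _ (hs d) (ht d)
  smul_mem' := fun p s hs => by
    rw [poly_smul_def]
    exact polyActionHom_preserves hF p s hs

lemma mem_ReesModule_iff {F : Fin n → ℤ → Submodule k V} {hF : ∀ i, IsFilt (F i)}
    {s : MIdx n →₀ V} : s ∈ ReesModule F hF ↔ ∀ d : MIdx n, s d ∈ fcap F (-d) :=
  Iff.rfl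

lemma mapRange_poly_smul (f : V →ₗ[k] W) (p : MvPolynomial (Fin n) k) (s : MIdx n →₀ V) :
    Finsupp.mapRange.linearMap f (p • s) = p • Finsupp.mapRange.linearMap f s := by
  rw [poly_smul_def, poly_smul_def]
  have hp : p ∈ (⊤ : Subalgebra k (MvPolynomial (Fin n) k)) := trivial
  rw [← MvPolynomial.adjoin_range_X] at hp
  induction hp using Algebra.adjoin_induction generalizing s with
  | mem q hq =>
      obtain ⟨i, rfl⟩ := hq
      rw [polyActionHom_X, polyActionHom_X (V := W)]
      refine Finsupp.ext fun d => ?_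
      rw [Finsupp.mapRange.linearMap_apply, Finsupp.mapRange_apply, shiftL_apply,
        shiftL_apply, Finsupp.mapRange.linearMap_apply, Finsupp.mapRange_apply]
  | algebraMap a =>
      rw [AlgHom.commutes, AlgHom.commutes]
      have h1 : (algebraMap k (Module.End k (MIdx n →₀ V)) a) s = a • s := rfl
      have h2 : ∀ t : MIdx n →₀ W, (algebraMap k (Module.End k (MIdx n →₀ W)) a) t = a • t :=
        fun t => rfl
      rw [h1, h2, map_smul]
  | add q r _ _ ihq ihr =>
      rw [map_add, map_add]
      have h1 : ∀ (q r : Module.End k (MIdx n →₀ V)) (s : MIdx n →₀ V),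
          (q + r) s = q s + r s := fun _ _ _ => rfl
      have h2 : ∀ (q r : Module.End k (MIdx n →₀ W)) (t : MIdx n →₀ W),
          (q + r) t = q t + r t := fun _ _ _ => rfl
      rw [h1, h2, map_add, ihq s, ihr s]
  | mul q r _ _ ihq ihr =>
      rw [map_mul, map_mul]
      have h1 : ∀ (q r : Module.End k (MIdx n →₀ V)) (s : MIdx n →₀ V),
          (q * r) s = q (r s) := fun _ _ _ => rfl
      have h2 : ∀ (q r : Module.End k (MIdx n →₀ W)) (t : MIdx n →₀ W),
          (q * r) t = q (r t) := fun _ _ _ => rfl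
      rw [h1, h2, ihq, ihr]

/-- The map `f ⊗ id` on Laurent-polynomial modules, as a `k[z_1,...,z_n]`-linear map. -/
noncomputable def reesMapA (f : V →ₗ[k] W) :
    (MIdx n →₀ V) →ₗ[MvPolynomial (Fin n) k] (MIdx n →₀ W) where
  toFun := Finsupp.mapRange.linearMap f
  map_add' := map_add _
  map_smul' := fun p s => mapRange_poly_smul f p s

lemma reesMapA_apply (f : V →ₗ[k] W) (s : MIdx n →₀ V) (d : MIdx n) :
    reesMapA f s d = f (s d) := rfl

/-- The induced `k[z_1,...,z_n]`-linear map between Rees modules of a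
filtration-preserving linear map. -/
noncomputable def reesHom {F : Fin n → ℤ → Submodule k V} {G : Fin n → ℤ → Submodule k W}
    (f : V →ₗ[k] W) (hF : ∀ i, IsFilt (F i)) (hG : ∀ i, IsFilt (G i))
    (hf : ∀ i p, Submodule.map f (F i p) ≤ G i p) :
    ↥(ReesModule F hF) →ₗ[MvPolynomial (Fin n) k] ↥(ReesModule G hG) :=
  (reesMapA f).restrict (fun s hs d => by
    rw [reesMapA_apply]
    refine Submodule.mem_iInf _ |>.2 fun i => ?_
    exact hf i _ ⟨s d, (Submodule.mem_iInf _).1 (hs d) i, rfl⟩)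

end ToricRees

open ToricRees

open scoped DirectSum

/-! The Rees module is cut out of `ℤⁿ →₀ V` coordinatewise, by `s d ∈ F^{-d}`, so it is
`⨁_d F^{-d}`. Multiplication by `z_i` shifts degrees by `e_i`, and a vector `v ∈ F^{-d+e_i}`
placed in degree `d` is `z_i` times `v` placed in degree `d - e_i`; hence `Σ_i z_i Rees(V)` is
cut out coordinatewise as well, by `s d ∈ Σ_i F^{-d+e_i}`. A coordinatewise quotient of a
direct sum is the direct sum of the coordinate quotients. -/

section CoordinatewiseSubmodule

variable {R ι M : Type*} [Ring R] [AddCommGroup M] [Module R M] {P Q : ι → Submodule R M}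
  {S : Submodule R (ι →₀ M)} {J : Submodule R S} (hS : ∀ s, s ∈ S ↔ ∀ i, s i ∈ P i)
  (hJ : ∀ x : S, x ∈ J ↔ ∀ i, (x : ι →₀ M) i ∈ Q i)

lemma coe_dfinsuppMk_support_apply [DecidableEq ι] (s : ι →₀ M) (hs : ∀ i, s i ∈ P i)
    (i : ι) : ((DFinsupp.mk s.support fun i => ⟨s i, hs i⟩ : Π₀ i, P i) i : M) = s i := by
  rw [DFinsupp.mk_apply]
  split_ifs with h
  · rfl
  · exact (Finsupp.notMem_support_iff.1 h).symm

noncomputable def directSumEquivOfMemIff : (⨁ i, P i) ≃ₗ[R] S := by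
  classical
  let toFinsupp : (⨁ i, P i) →ₗ[R] ι →₀ M :=
    (finsuppLequivDFinsupp R).symm.toLinearMap ∘ₗ DirectSum.lmap fun i => (P i).subtype
  refine .ofBijective (toFinsupp.codRestrict S fun y => (hS _).2 fun i => (y i).2)
    ⟨fun y z h => ?_, fun s => ?_⟩
  · ext i
    exact congr(($h : ι →₀ M) i)
  · exact ⟨DFinsupp.mk s.1.support fun i => ⟨s.1 i, (hS _).1 s.2 i⟩,
      Subtype.ext (Finsupp.ext (coe_dfinsuppMk_support_apply s.1 _))⟩

@[simp]
lemma directSumEquivOfMemIff_apply (y : ⨁ i, P i) (i : ι) :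
    (directSumEquivOfMemIff hS y : ι →₀ M) i = y i :=
  rfl

lemma directSumEquivOfMemIff_of [DecidableEq ι] (i : ι) (v : P i) :
    (directSumEquivOfMemIff hS (DirectSum.of _ i v) : ι →₀ M) = Finsupp.single i (v : M) := by
  ext j
  rcases eq_or_ne i j with rfl | h
  · simp
  · rw [directSumEquivOfMemIff_apply, DirectSum.of_eq_of_ne _ _ _ h.symm,
      Finsupp.single_eq_of_ne' h, ZeroMemClass.coe_zero]

noncomputable def quotientEquivDirectSumOfMemIff :
    (S ⧸ J) ≃ₗ[R] ⨁ i, ↥(P i) ⧸ (Q i).comap (P i).subtype := by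
  let q : (⨁ i, P i) →ₗ[R] ⨁ i, ↥(P i) ⧸ (Q i).comap (P i).subtype :=
    DirectSum.lmap fun i => ((Q i).comap (P i).subtype).mkQ
  have hker :
      J.map ((directSumEquivOfMemIff hS).symm : S →ₗ[R] ⨁ i, P i) = LinearMap.ker q := by
    ext y
    rw [Submodule.mem_map_equiv, LinearEquiv.symm_symm, hJ, LinearMap.mem_ker, DirectSum.ext_iff]
    refine forall_congr' fun i => ?_
    rw [directSumEquivOfMemIff_apply, DirectSum.lmap_apply, Submodule.mkQ_apply,
      DirectSum.zero_apply, Submodule.Quotient.mk_eq_zero, Submodule.mem_comap,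
      Submodule.coe_subtype]
  have hq : Function.Surjective q :=
    (DirectSum.lmap_surjective _).2 fun i => Submodule.mkQ_surjective _
  -- elaborated separately, with its target given: inlined, the unification below times out
  let e :=
    LinearMap.quotKerEquivOfSurjective (M₂ := ⨁ i, ↥(P i) ⧸ (Q i).comap (P i).subtype) q hq
  exact (Submodule.Quotient.equiv J _ _ hker).trans e

lemma quotientEquivDirectSumOfMemIff_mk [DecidableEq ι] (x : S) (i : ι) (v : M) (hv : v ∈ P i)
    (hx : (x : ι →₀ M) = Finsupp.single i v) :
    quotientEquivDirectSumOfMemIff hS hJ (Submodule.Quotient.mk x) =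
      DirectSum.of _ i (Submodule.Quotient.mk ⟨v, hv⟩) := by
  have hsymm : (directSumEquivOfMemIff hS).symm x = DirectSum.of _ i ⟨v, hv⟩ := by
    rw [LinearEquiv.symm_apply_eq]
    exact Subtype.ext (hx.trans (directSumEquivOfMemIff_of hS i ⟨v, hv⟩).symm)
  simp [quotientEquivDirectSumOfMemIff, hsymm]

end CoordinatewiseSubmodule

lemma Submodule.iSup_comap_subtype_of_le {R M ι : Type*} [Ring R] [AddCommGroup M] [Module R M]
    {S : Submodule R M} {N : ι → Submodule R M} (h : ∀ i, N i ≤ S) :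
    ⨆ i, (N i).comap S.subtype = (⨆ i, N i).comap S.subtype := by
  apply Submodule.map_injective_of_injective S.injective_subtype
  simp only [Submodule.map_iSup, Submodule.map_comap_subtype, inf_eq_right.2 (h _),
    inf_eq_right.2 (iSup_le h)]

namespace ToricRees

variable {k V : Type*} [Field k] [AddCommGroup V] [Module k V] {n : ℕ}
  {F : Fin n → ℤ → Submodule k V}

lemma shiftL_single (g d : MIdx n) (v : V) :
    shiftL (k := k) g (Finsupp.single d v) = Finsupp.single (d + g) v := by
  simp [shiftL]

lemma single_mem_ReesModule_iff (hF : ∀ i, IsFilt (F i)) {d : MIdx n} {v : V} :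
    Finsupp.single d v ∈ ReesModule F hF ↔ v ∈ fcap F (-d) := by
  refine ⟨fun h => by simpa using h d, fun hv e => ?_⟩
  rcases eq_or_ne d e with rfl | h
  · simpa using hv
  · simp [Finsupp.single_eq_of_ne' h]

lemma map_shiftL_le (hF : ∀ i, IsFilt (F i)) {g : MIdx n} (hg : 0 ≤ g) :
    ((ReesModule F hF).restrictScalars k).map (shiftL (k := k) g) ≤
      (ReesModule F hF).restrictScalars k := by
  rintro _ ⟨s, hs, rfl⟩
  exact shiftL_mem_ReesSet hF hg hs

lemma iSup_map_shiftL_eq (hF : ∀ i, IsFilt (F i)) :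
    ⨆ i : Fin n, ((ReesModule F hF).restrictScalars k).map (shiftL (k := k) (Pi.single i 1)) =
      Finsupp.submodule fun d => ⨆ i : Fin n, fcap F (-d + Pi.single i 1) := by
  refine le_antisymm (iSup_le fun i => ?_) ?_
  · rintro _ ⟨t, ht, rfl⟩ d
    rw [shiftL_apply]
    have ht' : t (d - Pi.single i 1) ∈ fcap F (-(d - Pi.single i 1)) := ht _
    rw [neg_sub, ← neg_add_eq_sub] at ht'
    exact Submodule.mem_iSup_of_mem i ht'
  · rw [Finsupp.submodule_eq_iSup]
    refine iSup_le fun d => Submodule.map_le_iff_le_comap.2 (iSup_le fun i v hv => ?_)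
    refine Submodule.mem_iSup_of_mem i ⟨Finsupp.single (d - Pi.single i 1) v, ?_, ?_⟩
    · exact (single_mem_ReesModule_iff hF).2 (by rwa [neg_sub, ← neg_add_eq_sub])
    · rw [shiftL_single, sub_add_cancel]
      rfl

lemma mem_iSup_comap_map_shiftL_iff (hF : ∀ i, IsFilt (F i))
    (x : (ReesModule F hF).restrictScalars k) :
    x ∈ ⨆ i : Fin n, Submodule.comap ((ReesModule F hF).restrictScalars k).subtype
        (((ReesModule F hF).restrictScalars k).map (shiftL (k := k) (Pi.single i 1))) ↔
      ∀ d, (x : MIdx n →₀ V) d ∈ ⨆ i : Fin n, fcap F (-d + Pi.single i 1) := by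
  rw [Submodule.iSup_comap_subtype_of_le
    fun i => map_shiftL_le hF (Pi.single_nonneg.2 zero_le_one), iSup_map_shiftL_eq hF]
  rfl

end ToricRees

theorem rees_fiber_at_origin_general {k V : Type*} [Field k] [AddCommGroup V] [Module k V]
    {n : ℕ} (F : Fin n → ℤ → Submodule k V)
    (hF : ∀ i, IsFilt (F i)) :
    ∃ e : (↥((ReesModule F hF).restrictScalars k) ⧸
            ⨆ i : Fin n, Submodule.comap ((ReesModule F hF).restrictScalars k).subtype
              (Submodule.map (shiftL (k := k) (V := V) (Pi.single i 1))
                ((ReesModule F hF).restrictScalars k)))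
          ≃ₗ[k] ⨁ d : MIdx n, Dmod F (-d),
      ∀ (x : ↥((ReesModule F hF).restrictScalars k)) (d : MIdx n) (v : V)
        (hv : v ∈ fcap F (-d)), (x : MIdx n →₀ V) = Finsupp.single d v →
        e (Submodule.Quotient.mk x)
          = DirectSum.of (fun d : MIdx n => Dmod F (-d)) d (Submodule.Quotient.mk ⟨v, hv⟩) :=
  ⟨quotientEquivDirectSumOfMemIff (fun _ => Iff.rfl) (mem_iSup_comap_map_shiftL_iff hF),
    quotientEquivDirectSumOfMemIff_mk _ _⟩

/-- The fibre of the Rees module at the origin,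
`Rees(V)/(z_1,...,z_n)Rees(V)`, is the graded vector space `⊕_p D^{-p}`. -/
theorem rees_fiber_at_origin {k V : Type*} [Field k] [AddCommGroup V] [Module k V]
    [FiniteDimensional k V] {n : ℕ} (F : Fin n → ℤ → Submodule k V)
    (hF : ∀ i, IsFilt (F i)) :
    ∃ e : (↥((ReesModule F hF).restrictScalars k) ⧸
            ⨆ i : Fin n, Submodule.comap ((ReesModule F hF).restrictScalars k).subtype
              (Submodule.map (shiftL (k := k) (V := V) (Pi.single i 1))
                ((ReesModule F hF).restrictScalars k)))
          ≃ₗ[k] ⨁ d : MIdx n, Dmod F (-d),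
      ∀ (x : ↥((ReesModule F hF).restrictScalars k)) (d : MIdx n) (v : V)
        (hv : v ∈ fcap F (-d)), (x : MIdx n →₀ V) = Finsupp.single d v →
        e (Submodule.Quotient.mk x)
          = DirectSum.of (fun d : MIdx n => Dmod F (-d)) d (Submodule.Quotient.mk ⟨v, hv⟩) :=
  rees_fiber_at_origin_general F hF
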